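/- arXiv:2107.08794 — 2 statements merged into one kernel-verified Lean document; each statement's English description precedes it below -/
import Mathlib

section
/- In the 5-bucket Cinderella game with bucket capacity C < 1.5, the Stepmother wins from every state: there is no nonempty set W ⊆ G with W ⊆ WP(W) ∩ G. -/
def EmptyPair (j : Fin 5) (b b' : Fin 5 → ℝ) : Prop :=
  b' j = 0 ∧ b' (j + 1) = 0 ∧ ∀ i, i ≠ j → i ≠ j + 1 → b' i = b i

def EnvMove (b b' : Fin 5 → ℝ) : Prop :=
  (∀ i, b i ≤ b' i) ∧ (∑ i, b' i) = (∑ i, b i) + 1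

def Safe (C : ℝ) : Set (Fin 5 → ℝ) := {b | ∀ i, 0 ≤ b i ∧ b i ≤ C}

def WP5 (C : ℝ) (X : Set (Fin 5 → ℝ)) : Set (Fin 5 → ℝ) :=
  {b | ∃ j b', EmptyPair j b b' ∧ b' ∈ Safe C ∧ ∀ b'', EnvMove b' b'' → b'' ∈ X}

theorem stepmother_wins (C : ℝ) (hC : C < 3 / 2) :
    ¬ ∃ W : Set (Fin 5 → ℝ), W.Nonempty ∧ W ⊆ WP5 C W ∩ Safe C := by
  rintro ⟨W, ⟨b0, hb0⟩, hW⟩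
  obtain ⟨j, b1, hE1, hS1, hN1⟩ := (hW hb0).1
  set b2 : Fin 5 → ℝ := fun i =>
    b1 i + (if i = j + 2 then (1:ℝ)/2 else 0) + (if i = j + 4 then (1:ℝ)/2 else 0) with hb2
  have hne : (j + 2 : Fin 5) ≠ j + 4 ∧ (j + 4 : Fin 5) ≠ j + 2 := by
    have : ∀ j : Fin 5, (j + 2 : Fin 5) ≠ j + 4 ∧ (j + 4 : Fin 5) ≠ j + 2 := by decide
    exact this j
  have hEnv1 : EnvMove b1 b2 := by
    constructor
    · intro i; simp only [hb2]; split_ifs <;> linarith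
    · simp only [hb2]
      rw [Finset.sum_add_distrib, Finset.sum_add_distrib]
      rw [Finset.sum_ite_eq' Finset.univ (j+2) (fun _ => (1:ℝ)/2)]
      rw [Finset.sum_ite_eq' Finset.univ (j+4) (fun _ => (1:ℝ)/2)]
      simp; ring
  have hb2W : b2 ∈ W := hN1 b2 hEnv1
  obtain ⟨j', b3, hE2, hS2, hN2⟩ := (hW hb2W).1
  have hkex : ((j + 2 : Fin 5) ≠ j' ∧ (j + 2 : Fin 5) ≠ j' + 1) ∨
      ((j + 4 : Fin 5) ≠ j' ∧ (j + 4 : Fin 5) ≠ j' + 1) := by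
    have : ∀ j j' : Fin 5, ((j + 2 : Fin 5) ≠ j' ∧ (j + 2 : Fin 5) ≠ j' + 1) ∨
        ((j + 4 : Fin 5) ≠ j' ∧ (j + 4 : Fin 5) ≠ j' + 1) := by decide
    exact this j j'
  obtain ⟨k, hk1, hk2, hkval⟩ : ∃ k, k ≠ j' ∧ k ≠ j' + 1 ∧ (1:ℝ)/2 ≤ b2 k := by
    rcases hkex with ⟨h1, h2⟩ | ⟨h1, h2⟩
    · refine ⟨j + 2, h1, h2, ?_⟩
      have := (hS1 (j + 2)).1
      simp only [hb2, if_pos rfl, if_neg hne.1]; norm_num; linarith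
    · refine ⟨j + 4, h1, h2, ?_⟩
      have := (hS1 (j + 4)).1
      simp only [hb2, if_pos rfl, if_neg hne.2]; norm_num; linarith
  have hb3k : b3 k = b2 k := hE2.2.2 k hk1 hk2
  set b4 : Fin 5 → ℝ := fun i => b3 i + (if i = k then (1:ℝ) else 0) with hb4
  have hEnv2 : EnvMove b3 b4 := by
    constructor
    · intro i; simp only [hb4]; split_ifs <;> linarith
    · simp only [hb4]
      rw [Finset.sum_add_distrib,
        Finset.sum_ite_eq' Finset.univ k (fun _ => (1:ℝ))]
      simp
  have hb4W : b4 ∈ W := hN2 b4 hEnv2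
  have hle : b4 k ≤ C := ((hW hb4W).2 k).2
  have h3 : (1:ℝ)/2 ≤ b3 k := hb3k ▸ hkval
  have h4 : b4 k = b3 k + 1 := by simp [hb4]
  linarith
end

section
/- In the 5-bucket Cinderella game with capacity C, if 0 is in the winning region (greatest fixed point of X ↦ WP(X) ∩ G), then C ≥ 3/2: from the empty state, after Cinderella's move and adversarial environment play concentrated on the three buckets Cinderella cannot empty, some bucket must eventually exceed any capacity below 3/2. -/
lemma envOne (a : Fin 5 → ℝ) (t : Fin 5) :
    EnvMove a (fun i => a i + (if i = t then 1 else 0)) := by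
  constructor
  · intro i; dsimp only; split <;> linarith
  · simp [Finset.sum_add_distrib]

lemma envTwo (a : Fin 5 → ℝ) (x y : Fin 5) (_hxy : x ≠ y) :
    EnvMove a (fun i =>
      a i + ((if i = x then (1/2:ℝ) else 0) + (if i = y then (1/2:ℝ) else 0))) := by
  constructor
  · intro i; dsimp only; split_ifs <;> linarith
  · rw [Finset.sum_add_distrib, Finset.sum_add_distrib]
    simp [Finset.sum_ite_eq']
    norm_num

lemma nonadj : ∀ j s : Fin 5, (s ≠ j ∧ s ≠ j + 1) ∨ (s + 2 ≠ j ∧ s + 2 ≠ j + 1) := by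
  decide

lemma neq_add_two : ∀ s : Fin 5, s ≠ s + 2 := by decide

/-- If the all-zeros state is in the winning region (i.e. in some post-fixed point of
`X ↦ WP(X) ∩ G`, equivalently in the greatest fixed point), then `C ≥ 3/2`. -/
theorem zero_winning_implies_cap (C : ℝ)
    (h : ∃ W : Set (Fin 5 → ℝ), (fun _ : Fin 5 => (0 : ℝ)) ∈ W ∧ W ⊆ WP5 C W ∩ Safe C) :
    3 / 2 ≤ C := by
  obtain ⟨W, h0, hsub⟩ := h
  -- Move 1: Cinderella empties a pair of the all-zero state; result is all zeros.
  obtain ⟨j1, a1, hp1, hs1, henv1⟩ := (hsub h0).1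
  have ha1 : ∀ i, a1 i = 0 := by
    intro i
    by_cases h1 : i = j1
    · rw [h1]; exact hp1.1
    · by_cases h2 : i = j1 + 1
      · rw [h2]; exact hp1.2.1
      · exact hp1.2.2 i h1 h2
  -- Env move 1: put 1/2 into x := j1+2 and x+2 = j1+4.
  set x : Fin 5 := j1 + 2 with hx
  have hb1 : (fun i => a1 i + ((if i = x then (1/2:ℝ) else 0) +
      (if i = x + 2 then (1/2:ℝ) else 0))) ∈ W :=
    henv1 _ (envTwo a1 x (x + 2) (neq_add_two x))
  set b1 : Fin 5 → ℝ := fun i => a1 i + ((if i = x then (1/2:ℝ) else 0) +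
      (if i = x + 2 then (1/2:ℝ) else 0)) with hb1def
  -- Move 2: Cinderella empties a pair; one of x, x+2 survives with value 1/2.
  obtain ⟨j2, a2, hp2, hs2, henv2⟩ := (hsub hb1).1
  have key2 : ∃ s : Fin 5, a2 s = 1/2 := by
    rcases nonadj j2 x with ⟨h1, h2⟩ | ⟨h1, h2⟩
    · refine ⟨x, ?_⟩
      rw [hp2.2.2 x h1 h2, hb1def]
      simp [ha1, neq_add_two x]
    · refine ⟨x + 2, ?_⟩
      rw [hp2.2.2 (x + 2) h1 h2, hb1def]
      simp [ha1, (neq_add_two x).symm]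
  obtain ⟨s, hs⟩ := key2
  -- Env move 2: put 1/2 into s and 1/2 into s+2.
  have hb2 : (fun i => a2 i + ((if i = s then (1/2:ℝ) else 0) +
      (if i = s + 2 then (1/2:ℝ) else 0))) ∈ W :=
    henv2 _ (envTwo a2 s (s + 2) (neq_add_two s))
  set b2 : Fin 5 → ℝ := fun i => a2 i + ((if i = s then (1/2:ℝ) else 0) +
      (if i = s + 2 then (1/2:ℝ) else 0)) with hb2def
  -- Move 3: Cinderella empties a pair; one of s, s+2 survives with value ≥ 1/2.
  obtain ⟨j3, a3, hp3, hs3, henv3⟩ := (hsub hb2).1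
  have key3 : ∃ t : Fin 5, 1/2 ≤ a3 t := by
    rcases nonadj j3 s with ⟨h1, h2⟩ | ⟨h1, h2⟩
    · refine ⟨s, ?_⟩
      rw [hp3.2.2 s h1 h2, hb2def]
      simp only [if_pos rfl, if_neg (neq_add_two s), if_true]
      linarith
    · refine ⟨s + 2, ?_⟩
      rw [hp3.2.2 (s + 2) h1 h2, hb2def]
      have h3 : (s + 2 : Fin 5) ≠ s := (neq_add_two s).symm
      simp only [if_pos rfl, if_neg h3, if_true]
      have := (hs2 (s + 2)).1
      linarith
  obtain ⟨t, ht⟩ := key3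
  -- Env move 3: put all of 1 into t; resulting state is in W ⊆ Safe C.
  have hb3 : (fun i => a3 i + (if i = t then (1:ℝ) else 0)) ∈ W :=
    henv3 _ (envOne a3 t)
  have hsafe3 := (hsub hb3).2 t
  simp only [if_pos rfl, if_true] at hsafe3
  linarith [hsafe3.2]
end
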